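/- arXiv:2511.15849 — 8 statements merged into one kernel-verified Lean document; each statement's English description precedes it below -/
import Mathlib

section
/- Let G be an undirected graph, s, t nonadjacent vertices, and S, T two minimal s,t-separators. If T ⊆ S ∪ C_s(G−S), then C_s(G−T) ⊆ C_s(G−S). -/
open SimpleGraph

variable {V : Type*}

/-- `u` can reach `v` in `G − S`: there is a walk whose support avoids `S`. -/
def ReachAvoid (G : SimpleGraph V) (S : Set V) (u v : V) : Prop :=
  ∃ p : G.Walk u v, ∀ w ∈ p.support, w ∉ S

/-- The union of the connected components of `G − S` that meet `X`. -/
def SetReach (G : SimpleGraph V) (S X : Set V) : Set V :=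
  {v | ∃ x ∈ X, ReachAvoid G S x v}

/-- Open neighborhood of a vertex set: vertices outside `X` adjacent to some vertex of `X`. -/
def Nbhd (G : SimpleGraph V) (X : Set V) : Set V :=
  {v | v ∉ X ∧ ∃ x ∈ X, G.Adj x v}

/-- `S` is an `A,B`-separator of `G`. -/
def IsSep (G : SimpleGraph V) (A B S : Set V) : Prop :=
  Disjoint S A ∧ Disjoint S B ∧ ∀ a ∈ A, ∀ b ∈ B, ¬ ReachAvoid G S a b

/-- `S` is an inclusion-minimal `A,B`-separator of `G`. -/
def IsMinlSep (G : SimpleGraph V) (A B S : Set V) : Prop :=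
  IsSep G A B S ∧ ∀ S' ⊂ S, ¬ IsSep G A B S'

/-- `S` is a minimum-cardinality `A,B`-separator of `G`. -/
def IsMinSep (G : SimpleGraph V) (A B S : Set V) : Prop :=
  IsSep G A B S ∧ ∀ S', IsSep G A B S' → S.ncard ≤ S'.ncard

/-- The minimum cardinality of an `A,B`-separator of `G` (`∞` if none exists). -/
noncomputable def kappa (G : SimpleGraph V) (A B : Set V) : ℕ∞ :=
  sInf {n : ℕ∞ | ∃ S : Set V, IsSep G A B S ∧ (S.ncard : ℕ∞) = n}

/-- If `T ⊆ S ∪ C_s(G−S)` for minimal `s,t`-separators `S,T`, then `C_s(G−T) ⊆ C_s(G−S)`. -/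
theorem comp_subset_of_sep_subset {V : Type*} (G : SimpleGraph V) (s t : V)
    (hst : s ≠ t) (hadj : ¬ G.Adj s t) (S T : Set V)
    (hS : IsMinlSep G {s} {t} S) (hT : IsMinlSep G {s} {t} T)
    (hsub : T ⊆ S ∪ SetReach G S {s}) :
    SetReach G T {s} ⊆ SetReach G S {s} := by

  classical
  rintro v ⟨x, hx, p, hp⟩
  rw [Set.mem_singleton_iff] at hx
  subst x
  obtain ⟨⟨hSs, hSt, hSsep⟩, hSmin⟩ := hS
  obtain ⟨⟨hTs, hTt, hTsep⟩, _⟩ := hT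
  by_cases hpS : ∀ w ∈ p.support, w ∉ S
  · exact ⟨s, rfl, p, hpS⟩
  push_neg at hpS
  obtain ⟨w, hwp, hwS⟩ := hpS
  exfalso
  have hwT : w ∉ T := hp w hwp
  -- S \ {w} is not a separator
  have hnot : ¬ IsSep G {s} {t} (S \ {w}) :=
    hSmin (S \ {w}) (Set.sdiff_singleton_ssubset.mpr hwS)
  have hq : ∃ q : G.Walk s t, ∀ u ∈ q.support, u ∉ S \ {w} := by
    by_contra h
    push_neg at h
    refine hnot ⟨hSs.mono_left Set.diff_subset, hSt.mono_left Set.diff_subset, ?_⟩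
    rintro a ha b hb ⟨q, hq⟩
    rw [Set.mem_singleton_iff] at ha hb; subst ha; subst hb
    obtain ⟨u, hu, huS⟩ := h q
    exact hq u hu huS
  obtain ⟨q, hq⟩ := hq
  have hwq : w ∈ q.support := by
    by_contra hwq
    refine hSsep s rfl t rfl ⟨q, fun u hu huS => ?_⟩
    rcases eq_or_ne u w with rfl | hne
    · exact hwq hu
    · exact hq u hu ⟨huS, hne⟩
  have hwqr : w ∈ q.reverse.support := by
    rwa [SimpleGraph.Walk.support_reverse, List.mem_reverse]
  -- r : walk from w to t, with w appearing exactly once (at the start)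
  set r : G.Walk w t := (q.reverse.takeUntil w hwqr).reverse with hr
  have hrsub : ∀ u ∈ r.support, u ∉ S \ {w} := by
    intro u hu
    rw [hr, SimpleGraph.Walk.support_reverse, List.mem_reverse] at hu
    have := SimpleGraph.Walk.support_takeUntil_subset _ hwqr hu
    rw [SimpleGraph.Walk.support_reverse, List.mem_reverse] at this
    exact hq u this
  have hrcount : r.support.count w = 1 := by
    rw [hr, SimpleGraph.Walk.support_reverse, List.count_reverse]
    exact SimpleGraph.Walk.count_support_takeUntil_eq_one q.reverse hwqr
  -- r avoids T
  have hrT : ∀ u ∈ r.support, u ∉ T := by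
    intro u hu huT
    rcases eq_or_ne u w with rfl | hne
    · exact hwT huT
    have huS : u ∉ S := fun h => hrsub u hu ⟨h, hne⟩
    rcases hsub huT with h | ⟨x, hx, a, ha⟩
    · exact huS h
    rw [Set.mem_singleton_iff] at hx
    subst x
    -- b : walk from u to t avoiding S
    set b : G.Walk u t := r.dropUntil u hu with hb
    have hwb : w ∉ b.support := by
      intro hwb
      have hdecomp := SimpleGraph.Walk.take_spec r hu
      have : r.support.count w =
          (r.takeUntil u hu).support.count w + b.support.tail.count w := by
        conv_lhs => rw [← hdecomp]
        rw [SimpleGraph.Walk.support_append, List.count_append]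
      have hw1 : w ∈ (r.takeUntil u hu).support := by
        have := SimpleGraph.Walk.start_mem_support (r.takeUntil u hu)
        exact this
      have h1 : 1 ≤ (r.takeUntil u hu).support.count w := List.one_le_count_iff.mpr hw1
      have h0 : b.support.tail.count w = 0 := by omega
      have htail : w ∉ b.support.tail := by
        intro h2; have := List.one_le_count_iff.mpr h2; omega
      rw [SimpleGraph.Walk.support_eq_cons b] at hwb
      rcases List.mem_cons.mp hwb with h2 | h2
      · exact hne h2.symm
      · exact htail h2
    have hbS : ∀ z ∈ b.support, z ∉ S := by
      intro z hz hzS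
      have hz' : z ∈ r.support := SimpleGraph.Walk.support_dropUntil_subset r hu hz
      rcases eq_or_ne z w with rfl | hzw
      · exact hwb hz
      · exact hrsub z hz' ⟨hzS, hzw⟩
    refine hSsep s rfl t rfl ⟨a.append b, fun z hz => ?_⟩
    rw [SimpleGraph.Walk.support_append] at hz
    rcases List.mem_append.mp hz with h | h
    · exact ha z h
    · exact hbS z (List.mem_of_mem_tail h)
  -- final walk s → t avoiding T
  refine hTsep s rfl t rfl ⟨(p.takeUntil w hwp).append r, fun z hz => ?_⟩
  rw [SimpleGraph.Walk.support_append] at hz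
  rcases List.mem_append.mp hz with h | h
  · exact hp z (SimpleGraph.Walk.support_takeUntil_subset p hwp h)
  · exact hrT z (List.mem_of_mem_tail h)
end

section
/- Let G be an undirected graph with nonadjacent vertices s and t, and let T be a minimum s,t-separator. Every vertex that belongs to some minimum s,t-separator of G lies in C_s(G−T) ∪ T ∪ C_t(G−T). -/
open SimpleGraph

variable {V : Type*}

/- auxiliary lemmas -/

lemma reachAvoid_refl {G : SimpleGraph V} {S : Set V} {u : V} (h : u ∉ S) :
    ReachAvoid G S u u :=
  ⟨Walk.nil, by simpa using h⟩

lemma reachAvoid_symm {G : SimpleGraph V} {S : Set V} {u v : V}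
    (h : ReachAvoid G S u v) : ReachAvoid G S v u := by
  obtain ⟨p, hp⟩ := h
  exact ⟨p.reverse, fun w hw => hp w (by simpa [Walk.support_reverse] using hw)⟩

lemma reachAvoid_trans {G : SimpleGraph V} {S : Set V} {u v w : V}
    (h1 : ReachAvoid G S u v) (h2 : ReachAvoid G S v w) : ReachAvoid G S u w := by
  obtain ⟨p, hp⟩ := h1
  obtain ⟨q, hq⟩ := h2
  refine ⟨p.append q, fun x hx => ?_⟩
  rcases (Walk.mem_support_append_iff _ _).mp hx with h | h
  · exact hp x h
  · exact hq x h

lemma reachAvoid_notMem {G : SimpleGraph V} {S : Set V} {u v : V}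
    (h : ReachAvoid G S u v) : v ∉ S := by
  obtain ⟨p, hp⟩ := h
  exact hp v p.end_mem_support

lemma reachAvoid_adj {G : SimpleGraph V} {S : Set V} {u x y : V}
    (h : ReachAvoid G S u x) (hxy : G.Adj x y) (hy : y ∉ S) : ReachAvoid G S u y := by
  refine reachAvoid_trans h ⟨Walk.cons hxy Walk.nil, ?_⟩
  intro w hw
  simp only [Walk.support_cons, Walk.support_nil, List.mem_cons,
    List.not_mem_nil, or_false] at hw
  rcases hw with rfl | rfl
  · exact reachAvoid_notMem h
  · exact hy

lemma mem_setReach_singleton {G : SimpleGraph V} {S : Set V} {u v : V} :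
    v ∈ SetReach G S {u} ↔ ReachAvoid G S u v := by
  constructor
  · rintro ⟨x, hx, h⟩
    rcases hx with rfl
    exact h
  · intro h
    exact ⟨u, rfl, h⟩

lemma setReach_adj {G : SimpleGraph V} {S : Set V} {u x y : V}
    (h : x ∈ SetReach G S {u}) (hxy : G.Adj x y) (hy : y ∉ S) :
    y ∈ SetReach G S {u} :=
  mem_setReach_singleton.mpr (reachAvoid_adj (mem_setReach_singleton.mp h) hxy hy)

lemma setReach_notMem {G : SimpleGraph V} {S : Set V} {u v : V}
    (h : v ∈ SetReach G S {u}) : v ∉ S :=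
  reachAvoid_notMem (mem_setReach_singleton.mp h)

/-- exit lemma: a walk from inside `X` to outside `X` meets `Nbhd G X`. -/
lemma exists_nbhd_of_walk {G : SimpleGraph V} {X : Set V} :
    ∀ {u w : V} (p : G.Walk u w), u ∈ X → w ∉ X → ∃ z ∈ p.support, z ∈ Nbhd G X := by
  intro u w p
  induction p with
  | nil => intro h1 h2; exact absurd h1 h2
  | @cons a b c hab p ih =>
    intro h1 h2
    by_cases hb : b ∈ X
    · obtain ⟨z, hz1, hz2⟩ := ih hb h2
      exact ⟨z, by simp [hz1], hz2⟩
    · exact ⟨b, by simp, hb, a, h1, hab⟩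

lemma isSep_nbhd {G : SimpleGraph V} {X : Set V} {s t : V}
    (hs : s ∈ X) (ht : t ∉ X) (htN : t ∉ Nbhd G X) :
    IsSep G {s} {t} (Nbhd G X) := by
  refine ⟨?_, ?_, ?_⟩
  · simp only [Set.disjoint_singleton_right]
    exact fun h => h.1 hs
  · simp only [Set.disjoint_singleton_right]
    exact htN
  · rintro a rfl b rfl ⟨p, hp⟩
    obtain ⟨z, hz1, hz2⟩ := exists_nbhd_of_walk p hs ht
    exact hp z hz1 hz2

/-- key inclusion: the neighborhood of the intersection of two reach-sets
from the same base point is covered by three pieces. -/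
lemma nbhd_inter_subset {G : SimpleGraph V} (S T : Set V) (u : V) :
    Nbhd G (SetReach G S {u} ∩ SetReach G T {u}) ⊆
      (S ∩ SetReach G T {u}) ∪ (S ∩ T) ∪ (T ∩ SetReach G S {u}) := by
  rintro x ⟨hxn, y, ⟨hyA, hyB⟩, hyx⟩
  by_cases hxS : x ∈ S
  · by_cases hxT : x ∈ T
    · exact Or.inl (Or.inr ⟨hxS, hxT⟩)
    · exact Or.inl (Or.inl ⟨hxS, setReach_adj hyB hyx hxT⟩)
  · have hxA : x ∈ SetReach G S {u} := setReach_adj hyA hyx hxS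
    have hxT : x ∈ T := by
      by_contra hxT
      exact hxn ⟨hxA, setReach_adj hyB hyx hxT⟩
    exact Or.inr ⟨hxT, hxA⟩

/-- Every vertex that belongs to some minimum `s,t`-separator of `G` lies in
`C_s(G−T) ∪ T ∪ C_t(G−T)` for any minimum `s,t`-separator `T`. -/
theorem minSep_vertices_subset {V : Type*} [Fintype V] (G : SimpleGraph V) (s t : V)
    (hst : s ≠ t) (hadj : ¬ G.Adj s t) (T : Set V) (hT : IsMinSep G {s} {t} T)
    (v : V) (hv : ∃ S : Set V, IsMinSep G {s} {t} S ∧ v ∈ S) :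
    v ∈ SetReach G T {s} ∪ T ∪ SetReach G T {t} := by
  classical
  by_contra hmem
  simp only [Set.mem_union, not_or] at hmem
  obtain ⟨⟨hvB, hvT⟩, hvB'⟩ := hmem
  obtain ⟨S, hS, hvS⟩ := hv
  -- abbreviations
  set A := SetReach G S {s} with hA
  set A' := SetReach G S {t} with hA'
  set B := SetReach G T {s} with hB
  set B' := SetReach G T {t} with hB'
  have hsS : s ∉ S := Set.disjoint_singleton_right.mp hS.1.1
  have htS : t ∉ S := Set.disjoint_singleton_right.mp hS.1.2.1
  have hsT : s ∉ T := Set.disjoint_singleton_right.mp hT.1.1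
  have htT : t ∉ T := Set.disjoint_singleton_right.mp hT.1.2.1
  have hSsep : ∀ x, ¬ (ReachAvoid G S s x ∧ ReachAvoid G S t x) := by
    rintro x ⟨h1, h2⟩
    exact hS.1.2.2 s rfl t rfl (reachAvoid_trans h1 (reachAvoid_symm h2))
  have hTsep : ∀ x, ¬ (ReachAvoid G T s x ∧ ReachAvoid G T t x) := by
    rintro x ⟨h1, h2⟩
    exact hT.1.2.2 s rfl t rfl (reachAvoid_trans h1 (reachAvoid_symm h2))
  have hsA : s ∈ A := mem_setReach_singleton.mpr (reachAvoid_refl hsS)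
  have htA' : t ∈ A' := mem_setReach_singleton.mpr (reachAvoid_refl htS)
  have hsB : s ∈ B := mem_setReach_singleton.mpr (reachAvoid_refl hsT)
  have htB' : t ∈ B' := mem_setReach_singleton.mpr (reachAvoid_refl htT)
  have htA : t ∉ A := fun h =>
    hSsep t ⟨mem_setReach_singleton.mp h, reachAvoid_refl htS⟩
  have hsA' : s ∉ A' := fun h =>
    hSsep s ⟨reachAvoid_refl hsS, mem_setReach_singleton.mp h⟩
  -- the two new separators
  have hsub1 := nbhd_inter_subset (G := G) S T s
  have hsub2 := nbhd_inter_subset (G := G) S T t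
  have hsep1 : IsSep G {s} {t} (Nbhd G (A ∩ B)) := by
    refine isSep_nbhd ⟨hsA, hsB⟩ (fun h => htA h.1) (fun h => ?_)
    rcases hsub1 h with (⟨h1, _⟩ | ⟨h1, _⟩) | ⟨h1, _⟩
    · exact htS h1
    · exact htS h1
    · exact htT h1
  have hsep2' : IsSep G {t} {s} (Nbhd G (A' ∩ B')) := by
    refine isSep_nbhd ⟨htA', htB'⟩ (fun h => hsA' h.1) (fun h => ?_)
    rcases hsub2 h with (⟨h1, _⟩ | ⟨h1, _⟩) | ⟨h1, _⟩
    · exact hsS h1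
    · exact hsS h1
    · exact hsT h1
  have hsep2 : IsSep G {s} {t} (Nbhd G (A' ∩ B')) :=
    ⟨hsep2'.2.1, hsep2'.1, fun a ha b hb hr =>
      hsep2'.2.2 b hb a ha (reachAvoid_symm hr)⟩
  -- cardinality facts
  have hTS : T.ncard = S.ncard := le_antisymm (hT.2 S hS.1) (hS.2 T hT.1)
  have h1 : S.ncard ≤ (Nbhd G (A ∩ B)).ncard := hS.2 _ hsep1
  have h2 : S.ncard ≤ (Nbhd G (A' ∩ B')).ncard := hS.2 _ hsep2
  have h3 : (Nbhd G (A ∩ B)).ncard ≤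
      (S ∩ B).ncard + (S ∩ T).ncard + (T ∩ A).ncard := by
    calc (Nbhd G (A ∩ B)).ncard
        ≤ ((S ∩ B) ∪ (S ∩ T) ∪ (T ∩ A)).ncard :=
          Set.ncard_le_ncard hsub1 (Set.toFinite _)
      _ ≤ ((S ∩ B) ∪ (S ∩ T)).ncard + (T ∩ A).ncard := Set.ncard_union_le _ _
      _ ≤ (S ∩ B).ncard + (S ∩ T).ncard + (T ∩ A).ncard :=
          Nat.add_le_add_right (Set.ncard_union_le _ _) _
  have h4 : (Nbhd G (A' ∩ B')).ncard ≤
      (S ∩ B').ncard + (S ∩ T).ncard + (T ∩ A').ncard := by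
    calc (Nbhd G (A' ∩ B')).ncard
        ≤ ((S ∩ B') ∪ (S ∩ T) ∪ (T ∩ A')).ncard :=
          Set.ncard_le_ncard hsub2 (Set.toFinite _)
      _ ≤ ((S ∩ B') ∪ (S ∩ T)).ncard + (T ∩ A').ncard := Set.ncard_union_le _ _
      _ ≤ (S ∩ B').ncard + (S ∩ T).ncard + (T ∩ A').ncard :=
          Nat.add_le_add_right (Set.ncard_union_le _ _) _
  -- disjointness facts
  have hBB' : ∀ x, x ∈ B → x ∉ B' := fun x h h' =>
    hTsep x ⟨mem_setReach_singleton.mp h, mem_setReach_singleton.mp h'⟩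
  have hAA' : ∀ x, x ∈ A → x ∉ A' := fun x h h' =>
    hSsep x ⟨mem_setReach_singleton.mp h, mem_setReach_singleton.mp h'⟩
  -- |S∩B| + |S∩T| + |S∩B'| < |S|
  have h5 : (S ∩ B).ncard + (S ∩ T).ncard + (S ∩ B').ncard < S.ncard := by
    have hd1 : Disjoint (S ∩ B) (S ∩ T) := by
      rw [Set.disjoint_left]
      rintro x ⟨_, hx2⟩ ⟨_, hx4⟩
      exact setReach_notMem hx2 hx4
    have hd2 : Disjoint ((S ∩ B) ∪ (S ∩ T)) (S ∩ B') := by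
      rw [Set.disjoint_left]
      rintro x (⟨_, hx2⟩ | ⟨_, hx2⟩) ⟨_, hx4⟩
      · exact hBB' x hx2 hx4
      · exact setReach_notMem hx4 hx2
    have hssub : ((S ∩ B) ∪ (S ∩ T)) ∪ (S ∩ B') ⊂ S := by
      constructor
      · rintro x ((⟨h, _⟩ | ⟨h, _⟩) | ⟨h, _⟩) <;> exact h
      · intro hsub
        have := hsub hvS
        rcases this with (⟨_, h⟩ | ⟨_, h⟩) | ⟨_, h⟩
        · exact hvB h
        · exact hvT h
        · exact hvB' h
    have := Set.ncard_lt_ncard hssub (Set.toFinite _)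
    rwa [Set.ncard_union_eq hd2 (Set.toFinite _) (Set.toFinite _),
      Set.ncard_union_eq hd1 (Set.toFinite _) (Set.toFinite _)] at this
  -- |T∩A| + |S∩T| + |T∩A'| ≤ |T|
  have h6 : (T ∩ A).ncard + (S ∩ T).ncard + (T ∩ A').ncard ≤ T.ncard := by
    have hd1 : Disjoint (T ∩ A) (S ∩ T) := by
      rw [Set.disjoint_left]
      rintro x ⟨_, hx2⟩ ⟨hx3, _⟩
      exact setReach_notMem hx2 hx3
    have hd2 : Disjoint ((T ∩ A) ∪ (S ∩ T)) (T ∩ A') := by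
      rw [Set.disjoint_left]
      rintro x (⟨_, hx2⟩ | ⟨hx1, _⟩) ⟨_, hx4⟩
      · exact hAA' x hx2 hx4
      · exact setReach_notMem hx4 hx1
    have hsub : ((T ∩ A) ∪ (S ∩ T)) ∪ (T ∩ A') ⊆ T := by
      rintro x ((⟨h, _⟩ | ⟨_, h⟩) | ⟨h, _⟩) <;> exact h
    have := Set.ncard_le_ncard hsub (Set.toFinite _)
    rwa [Set.ncard_union_eq hd2 (Set.toFinite _) (Set.toFinite _),
      Set.ncard_union_eq hd1 (Set.toFinite _) (Set.toFinite _)] at this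
  omega
end

section
/- Let G be an undirected graph, s,t nonadjacent vertices, A ⊆ V(G)\{s,t}, and let H be the graph obtained from G by adding all edges between s and the closed neighborhood N_G[A]. Then the minimal ({s}∪A),t-separators of G are exactly the minimal s,t-separators of H, and for every such separator S the component of {s}∪A in G−S equals the component of s in H−S. -/
open SimpleGraph

variable {V : Type*}

/-! In `H`, `s` is adjacent to every vertex of `N_G[A]`, so it absorbs the whole of `A` as a
source: the component of `s` in `H − S` is that of `{s} ∪ A` in `G − S` whenever `S` avoids
`A`, and hence the two separation problems have the same separators among sets avoiding `A`.
A minimal `s,t`-separator of `H` avoids `A` automatically: every `H`-neighbour of `a ∈ A` other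
than `s` is already an `H`-neighbour of `s`, so `a` can be dropped from any separator. -/

section SetReach

variable {G : SimpleGraph V} {S X : Set V}

lemma mem_setReach_of_mem {x : V} (hx : x ∈ X) (hxS : x ∉ S) : x ∈ SetReach G S X :=
  ⟨x, hx, Walk.nil, by simp [hxS]⟩

lemma mem_setReach_of_adj {u v : V} (hu : u ∈ SetReach G S X) (huv : G.Adj u v) (hv : v ∉ S) :
    v ∈ SetReach G S X := by
  obtain ⟨x, hx, p, hp⟩ := hu
  refine ⟨x, hx, p.concat huv, fun w hw => ?_⟩
  rw [Walk.support_concat, List.mem_append, List.mem_singleton] at hw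
  rcases hw with hw | rfl
  exacts [hp w hw, hv]

lemma setReach_subset_of_closed {R : Set V} (hX : ∀ x ∈ X, x ∉ S → x ∈ R)
    (hR : ∀ u v, u ∈ R → G.Adj u v → v ∉ S → v ∈ R) : SetReach G S X ⊆ R := by
  rintro v ⟨x, hx, p, hp⟩
  have hxR := hX x hx (hp x p.start_mem_support)
  clear hx
  induction p with
  | nil => exact hxR
  | cons h q ih =>
    exact ih (fun w hw => hp w (by simp [hw])) (hR _ _ hxR h (hp _ (by simp)))

lemma setReach_diff_singleton_subset {s a : V} (hsS : s ∉ S)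
    (ha : ∀ v, G.Adj a v → v ≠ s → G.Adj s v) :
    SetReach G (S \ {a}) {s} ⊆ SetReach G S {s} ∪ {a} := by
  refine setReach_subset_of_closed (fun x hx _ => Or.inl (mem_setReach_of_mem hx (hx ▸ hsS)))
    fun u v hu huv hv => ?_
  by_cases hva : v = a
  · exact Or.inr hva
  have hvS : v ∉ S := fun h => hv ⟨h, hva⟩
  rcases hu with hu | rfl
  · exact Or.inl (mem_setReach_of_adj hu huv hvS)
  by_cases hvs : v = s
  · exact Or.inl (mem_setReach_of_mem hvs hvS)
  · exact Or.inl (mem_setReach_of_adj (mem_setReach_of_mem rfl hsS) (ha v huv hvs) hvS)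

end SetReach

section Separators

variable {G H : SimpleGraph V} {X Y S : Set V}

lemma isSep_singleton_iff {t : V} :
    IsSep G X {t} S ↔ Disjoint S X ∧ Disjoint S {t} ∧ t ∉ SetReach G S X := by
  refine and_congr_right fun _ => and_congr_right fun _ => ?_
  constructor
  · rintro h ⟨x, hx, hr⟩
    exact h x hx t rfl hr
  · rintro h a ha b rfl hr
    exact h ⟨a, ha, hr⟩

lemma isMinlSep_iff_of_forall_subset {X' Y' : Set V}
    (h : ∀ S' ⊆ S, (IsSep G X Y S' ↔ IsSep H X' Y' S')) :
    IsMinlSep G X Y S ↔ IsMinlSep H X' Y' S :=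
  and_congr (h S subset_rfl) (forall₂_congr fun S' hS' => not_congr (h S' hS'.subset))

lemma IsMinlSep.notMem_of_forall_adj {s t a : V} (hS : IsMinlSep G {s} {t} S) (hat : a ≠ t)
    (ha : ∀ v, G.Adj a v → v ≠ s → G.Adj s v) : a ∉ S := by
  intro haS
  obtain ⟨hsS, htS, htR⟩ := isSep_singleton_iff.1 hS.1
  refine hS.2 (S \ {a}) (Set.sdiff_singleton_ssubset.2 haS) (isSep_singleton_iff.2
    ⟨hsS.mono_left Set.sdiff_subset, htS.mono_left Set.sdiff_subset, fun ht => ?_⟩)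
  rcases setReach_diff_singleton_subset (hsS.notMem_of_mem_right rfl) ha ht with ht | rfl
  exacts [htR ht, hat rfl]

end Separators

def addEdgesToClosedNbhd (G : SimpleGraph V) (s : V) (A : Set V) : SimpleGraph V :=
  G ⊔ fromRel (fun u v => u = s ∧ v ∈ A ∪ Nbhd G A)

section AddEdgesToClosedNbhd

variable {G : SimpleGraph V} {s : V} {A S : Set V}

lemma mem_closedNbhd_of_adj {a v : V} (ha : a ∈ A) (hav : G.Adj a v) : v ∈ A ∪ Nbhd G A := by
  by_cases hvA : v ∈ A
  exacts [Or.inl hvA, Or.inr ⟨hvA, a, ha, hav⟩]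

lemma adj_addEdgesToClosedNbhd_iff {u v : V} :
    (addEdgesToClosedNbhd G s A).Adj u v ↔ G.Adj u v ∨
      u ≠ v ∧ ((u = s ∧ v ∈ A ∪ Nbhd G A) ∨ (v = s ∧ u ∈ A ∪ Nbhd G A)) := by
  simp [addEdgesToClosedNbhd]

lemma le_addEdgesToClosedNbhd : G ≤ addEdgesToClosedNbhd G s A := le_sup_left

lemma addEdgesToClosedNbhd_adj_of_mem {v : V} (hvs : v ≠ s) (hv : v ∈ A ∪ Nbhd G A) :
    (addEdgesToClosedNbhd G s A).Adj s v :=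
  adj_addEdgesToClosedNbhd_iff.2 (Or.inr ⟨hvs.symm, Or.inl ⟨rfl, hv⟩⟩)

lemma addEdgesToClosedNbhd_adj_of_adj_mem {a v : V} (hsA : s ∉ A) (ha : a ∈ A)
    (hav : (addEdgesToClosedNbhd G s A).Adj a v) (hvs : v ≠ s) :
    (addEdgesToClosedNbhd G s A).Adj s v := by
  refine addEdgesToClosedNbhd_adj_of_mem hvs ?_
  rcases adj_addEdgesToClosedNbhd_iff.1 hav with hG | ⟨-, ⟨rfl, -⟩ | ⟨rfl, -⟩⟩
  exacts [mem_closedNbhd_of_adj ha hG, absurd ha hsA, absurd rfl hvs]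

lemma setReach_addEdgesToClosedNbhd (hSA : Disjoint S A) (hsS : s ∉ S) :
    SetReach G S ({s} ∪ A) = SetReach (addEdgesToClosedNbhd G s A) S {s} := by
  apply Set.Subset.antisymm
  · refine setReach_subset_of_closed ?_
      fun u v hu huv hv => mem_setReach_of_adj hu (le_addEdgesToClosedNbhd huv) hv
    rintro x (rfl | hxA) hxS
    · exact mem_setReach_of_mem rfl hxS
    by_cases hxs : x = s
    · exact mem_setReach_of_mem hxs hxS
    · exact mem_setReach_of_adj (mem_setReach_of_mem rfl hsS)
        (addEdgesToClosedNbhd_adj_of_mem hxs (Or.inl hxA)) hxS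
  · refine setReach_subset_of_closed (fun x hx hxS => mem_setReach_of_mem (Or.inl hx) hxS)
      fun u v hu huv hv => ?_
    rcases adj_addEdgesToClosedNbhd_iff.1 huv with
      hG | ⟨-, ⟨rfl, hvA | ⟨-, _, ha, hav⟩⟩ | ⟨rfl, -⟩⟩
    · exact mem_setReach_of_adj hu hG hv
    · exact mem_setReach_of_mem (Or.inr hvA) hv
    · exact mem_setReach_of_adj (mem_setReach_of_mem (Or.inr ha) (hSA.notMem_of_mem_right ha))
        hav hv
    · exact mem_setReach_of_mem (Or.inl rfl) hv

lemma isSep_addEdgesToClosedNbhd_iff {t : V} (hSA : Disjoint S A) :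
    IsSep G ({s} ∪ A) {t} S ↔ IsSep (addEdgesToClosedNbhd G s A) {s} {t} S := by
  rw [isSep_singleton_iff, isSep_singleton_iff, Set.disjoint_union_right]
  constructor
  · rintro ⟨⟨hsS, -⟩, htS, htR⟩
    rw [setReach_addEdgesToClosedNbhd hSA (hsS.notMem_of_mem_right rfl)] at htR
    exact ⟨hsS, htS, htR⟩
  · rintro ⟨hsS, htS, htR⟩
    rw [← setReach_addEdgesToClosedNbhd hSA (hsS.notMem_of_mem_right rfl)] at htR
    exact ⟨⟨hsS, hSA⟩, htS, htR⟩

lemma IsMinlSep.disjoint_of_addEdgesToClosedNbhd {t : V} (hsA : s ∉ A) (htA : t ∉ A)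
    (hS : IsMinlSep (addEdgesToClosedNbhd G s A) {s} {t} S) : Disjoint S A :=
  Set.disjoint_right.2 fun _ ha => hS.notMem_of_forall_adj (ne_of_mem_of_not_mem ha htA)
    fun _ hav hvs => addEdgesToClosedNbhd_adj_of_adj_mem hsA ha hav hvs

end AddEdgesToClosedNbhd

theorem minlSep_add_edges_general {V : Type*} (G : SimpleGraph V) (s t : V) (A : Set V)
    (hsA : s ∉ A) (htA : t ∉ A)
    (H : SimpleGraph V)
    (hH : H = G ⊔ SimpleGraph.fromRel (fun u v => u = s ∧ v ∈ A ∪ Nbhd G A)) :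
    (∀ S : Set V, IsMinlSep G ({s} ∪ A) {t} S ↔ IsMinlSep H {s} {t} S) ∧
    (∀ S : Set V, IsMinlSep G ({s} ∪ A) {t} S →
      SetReach G S ({s} ∪ A) = SetReach H S {s}) := by
  change H = addEdgesToClosedNbhd G s A at hH
  subst hH
  have minlSep_iff {S : Set V} (hSA : Disjoint S A) :
      IsMinlSep G ({s} ∪ A) {t} S ↔ IsMinlSep (addEdgesToClosedNbhd G s A) {s} {t} S :=
    isMinlSep_iff_of_forall_subset fun _ hS' => isSep_addEdgesToClosedNbhd_iff (hSA.mono_left hS')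
  have disjoint_of_minlSep {S : Set V} (hS : IsMinlSep G ({s} ∪ A) {t} S) : Disjoint S A :=
    hS.1.1.mono_right Set.subset_union_right
  refine ⟨fun S => ⟨fun hS => ?_, fun hS => ?_⟩, fun S hS => ?_⟩
  · exact (minlSep_iff (disjoint_of_minlSep hS)).1 hS
  · exact (minlSep_iff (hS.disjoint_of_addEdgesToClosedNbhd hsA htA)).2 hS
  · exact setReach_addEdgesToClosedNbhd (disjoint_of_minlSep hS)
      (hS.1.1.notMem_of_mem_right (Or.inl rfl))

/-- Minimal `({s}∪A),t`-separators of `G` are exactly the minimal `s,t`-separators of the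
graph `H` obtained from `G` by adding all edges between `s` and the closed neighborhood of
`A`, and the corresponding components agree. -/
theorem minlSep_add_edges {V : Type*} (G : SimpleGraph V) (s t : V) (A : Set V)
    (hst : s ≠ t) (hadj : ¬ G.Adj s t) (hsA : s ∉ A) (htA : t ∉ A)
    (H : SimpleGraph V)
    (hH : H = G ⊔ SimpleGraph.fromRel (fun u v => u = s ∧ v ∈ A ∪ Nbhd G A)) :
    (∀ S : Set V, IsMinlSep G ({s} ∪ A) {t} S ↔ IsMinlSep H {s} {t} S) ∧
    (∀ S : Set V, IsMinlSep G ({s} ∪ A) {t} S →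
      SetReach G S ({s} ∪ A) = SetReach H S {s}) :=
  minlSep_add_edges_general G s t A hsA htA H hH
end

section
/- Let G be an undirected graph, s,t nonadjacent, and suppose among all minimum s,t-separators there is one, L, whose component C_t(G−L) is inclusion-minimal. Then L is unique: for any minimum s,t-separator T with C_t(G−T) not containing C_t(G−L), we have that T is not minimum; equivalently, any minimal s,t-separator T with C_t(G−L) ⊄ C_t(G−T) satisfies |T| > κ_{s,t}(G). -/
open SimpleGraph

variable {V : Type*}

/-- If `L` is a minimum `s,t`-separator closest to `t`, then every minimal `s,t`-separator
`T` with `C_t(G−L) ⊄ C_t(G−T)` satisfies `|T| > κ_{s,t}(G)`. -/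
theorem closest_minSep_unique {V : Type*} [Fintype V] (G : SimpleGraph V) (s t : V)
    (hst : s ≠ t) (hadj : ¬ G.Adj s t) (L : Set V) (hL : IsMinSep G {s} {t} L)
    (hclosest : ∀ T, IsMinSep G {s} {t} T → SetReach G L {t} ⊆ SetReach G T {t}) :
    ∀ T, IsMinlSep G {s} {t} T → ¬ (SetReach G L {t} ⊆ SetReach G T {t}) →
      kappa G {s} {t} < (T.ncard : ℕ∞) := by
  intro T hT hnsub
  have hTsep := hT.1
  have hle : kappa G {s} {t} ≤ (T.ncard : ℕ∞) := sInf_le ⟨T, hTsep, rfl⟩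
  rcases lt_or_eq_of_le hle with h | h
  · exact h
  · exfalso
    apply hnsub
    apply hclosest
    refine ⟨hTsep, fun S' hS' => ?_⟩
    have h2 : kappa G {s} {t} ≤ (S'.ncard : ℕ∞) := sInf_le ⟨S', hS', rfl⟩
    rw [h] at h2
    exact_mod_cast h2
end

section
/- Let G be undirected, s,t nonadjacent, and let L be the minimum s,t-separator closest to t (i.e., C_t(G−L) ⊆ C_t(G−T) for all minimum s,t-separators T). Then for every x ∈ L, the minimum size of an ({s,x}),t-separator is strictly greater than κ_{s,t}(G). -/
/-!
A vertex `x` of a minimum separator `L` has a neighbour `y` on the `t`-side of `L`, since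
otherwise `L \ {x}` would still separate. An `{s, x},t`-separator `S` with `|S| ≤ |L|` would be
a minimum `s,t`-separator, so `y` would lie on the `t`-side of `S` as well, as `L` is closest
to `t`; the edge `yx` then joins `t` to `x` in `G − S`, a contradiction.
-/

open SimpleGraph

variable {V : Type*}

variable {G : SimpleGraph V} {A B S : Set V}

lemma ReachAvoid.symm {u v : V} (h : ReachAvoid G S u v) : ReachAvoid G S v u := by
  obtain ⟨p, hp⟩ := h
  exact ⟨p.reverse, fun w hw => hp w (by simpa using hw)⟩

lemma ReachAvoid.concat {u v w : V} (h : ReachAvoid G S u v) (hvw : G.Adj v w) (hw : w ∉ S) :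
    ReachAvoid G S u w := by
  obtain ⟨p, hp⟩ := h
  refine ⟨p.concat hvw, fun z hz => ?_⟩
  rw [Walk.support_concat, List.mem_append, List.mem_singleton] at hz
  rcases hz with hz | rfl
  exacts [hp z hz, hw]

/-- In the second case the walk passes through `x`, and `y` is the vertex after its last visit. -/
lemma ReachAvoid.of_diff_singleton {x u v : V} (h : ReachAvoid G (S \ {x}) u v) (hv : v ∉ S) :
    ReachAvoid G S u v ∨ ∃ y, G.Adj x y ∧ ReachAvoid G S y v := by
  obtain ⟨p, hp⟩ := h
  induction p with
  | nil => exact Or.inl ⟨.nil, by simpa using hv⟩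
  | @cons u w v huw q ih =>
    rcases ih hv fun z hz => hp z (q.support_subset_support_cons huw hz) with ⟨q', hq'⟩ | hy
    · by_cases hu : u ∈ S
      · have hux : u = x := by
          by_contra hux
          exact hp u (Walk.start_mem_support _) ⟨hu, hux⟩
        exact Or.inr ⟨w, hux ▸ huw, q', hq'⟩
      · refine Or.inl ⟨.cons huw q', fun z hz => ?_⟩
        rw [Walk.support_cons, List.mem_cons] at hz
        rcases hz with rfl | hz
        exacts [hu, hq' z hz]
    · exact Or.inr hy

lemma IsSep.mono_left {A' : Set V} (hS : IsSep G A B S) (hA : A' ⊆ A) : IsSep G A' B S :=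
  ⟨hS.1.mono_right hA, hS.2.1, fun a ha => hS.2.2 a (hA ha)⟩

lemma IsSep.notMem_setReach_of_adj {x y : V} (hS : IsSep G A B S) (hx : x ∈ A)
    (hxy : G.Adj x y) : y ∉ SetReach G S B := by
  rintro ⟨b, hb, hby⟩
  exact hS.2.2 x hx b hb (hby.concat hxy.symm (hS.1.notMem_of_mem_right hx)).symm

lemma IsMinlSep.exists_adj_mem_setReach {L : Set V} (hL : IsMinlSep G A B L) {x : V}
    (hx : x ∈ L) : ∃ y, G.Adj x y ∧ y ∈ SetReach G L B := by
  by_contra! hnone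
  refine hL.2 (L \ {x}) (Set.sdiff_singleton_ssubset.mpr hx)
    ⟨hL.1.1.mono_left Set.sdiff_subset, hL.1.2.1.mono_left Set.sdiff_subset, ?_⟩
  intro a ha b hb hab
  rcases hab.of_diff_singleton (hL.1.2.1.notMem_of_mem_right hb) with hab | ⟨y, hxy, hyb⟩
  · exact hL.1.2.2 a ha b hb hab
  · exact hnone y hxy ⟨b, hb, hyb.symm⟩

lemma IsMinSep.isMinlSep [Finite V] (hS : IsMinSep G A B S) : IsMinlSep G A B S :=
  ⟨hS.1, fun _ hS' hsep => (Set.ncard_lt_ncard hS').not_ge (hS.2 _ hsep)⟩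

lemma kappa_le_ncard (hS : IsSep G A B S) : kappa G A B ≤ S.ncard :=
  sInf_le ⟨S, hS, rfl⟩

lemma le_kappa {n : ℕ∞} (h : ∀ S, IsSep G A B S → n ≤ S.ncard) : n ≤ kappa G A B :=
  le_sInf fun _ ⟨S, hS, hn⟩ => hn ▸ h S hS

theorem kappa_lt_of_mem_closest_general {V : Type*} [Fintype V] (G : SimpleGraph V) (s t : V)
    (L : Set V) (hL : IsMinSep G {s} {t} L)
    (hclosest : ∀ T, IsMinSep G {s} {t} T → SetReach G L {t} ⊆ SetReach G T {t})
    (x : V) (hx : x ∈ L) :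
    kappa G {s} {t} < kappa G {s, x} {t} := by
  obtain ⟨y, hxy, hy⟩ := hL.isMinlSep.exists_adj_mem_setReach hx
  have hlt : ∀ S, IsSep G {s, x} {t} S → L.ncard < S.ncard := by
    intro S hS
    by_contra! hle
    have hSs : IsSep G {s} {t} S := hS.mono_left (by simp)
    have hSmin : IsMinSep G {s} {t} S := ⟨hSs, fun T hT => hle.trans (hL.2 T hT)⟩
    exact hS.notMem_setReach_of_adj (by simp) hxy (hclosest S hSmin hy)
  calc kappa G {s} {t} ≤ L.ncard := kappa_le_ncard hL.1
    _ < L.ncard + 1 := by exact_mod_cast Nat.lt_succ_self _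
    _ ≤ kappa G {s, x} {t} := le_kappa fun S hS => by exact_mod_cast hlt S hS

/-- If `L` is the minimum `s,t`-separator closest to `t`, then for every `x ∈ L` the minimum
size of an `{s,x},t`-separator is strictly greater than `κ_{s,t}(G)`. -/
theorem kappa_lt_of_mem_closest {V : Type*} [Fintype V] (G : SimpleGraph V) (s t : V)
    (hst : s ≠ t) (hadj : ¬ G.Adj s t) (L : Set V) (hL : IsMinSep G {s} {t} L)
    (hclosest : ∀ T, IsMinSep G {s} {t} T → SetReach G L {t} ⊆ SetReach G T {t})
    (x : V) (hx : x ∈ L) :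
    kappa G {s} {t} < kappa G {s, x} {t} :=
  kappa_lt_of_mem_closest_general G s t L hL hclosest x hx
end

section
/- Let G be an undirected graph and let D ⊆ V(G) be a vertex set with s ∈ D, t ∉ D, such that G[D] (the induced subgraph on D) is connected and D is not adjacent to t. Then the open neighborhood N_G(D) contains exactly one minimal D,t-separator. -/
/-!
Call a vertex `v ∈ N(D)` *reaching* (`nbhdReaching`) if `t` can be reached from `v` without
re-entering `N[D] = D ∪ N(D)`. Following any `D`–`t` walk from its last vertex in `N[D]` shows
that every such walk passes through a reaching vertex (since `t ∉ N[D]`), so the reaching vertices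
form a `D,t`-separator. Conversely, if `T ⊆ N(D)` misses a reaching vertex `v`, a neighbour of `v`
in `D` followed by the walk from `v` reaches `t` avoiding `T`. Hence the reaching vertices lie in
every `D,t`-separator inside `N(D)`, which makes them the unique minimal one there.
-/

open SimpleGraph

variable {V : Type*}

variable {G : SimpleGraph V}

theorem IsMinlSep.eq_of_subset {A B S T : Set V} (hT : IsMinlSep G A B T) (hS : IsSep G A B S)
    (hST : S ⊆ T) : S = T := by
  by_contra hne
  exact hT.2 S (hST.ssubset_of_ne hne) hS

theorem nbhd_disjoint_self (D : Set V) : Disjoint (Nbhd G D) D :=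
  Set.disjoint_left.2 fun _ hv => hv.1

def nbhdReaching (G : SimpleGraph V) (D : Set V) (t : V) : Set V :=
  {v | v ∈ Nbhd G D ∧ ReachAvoid G ((D ∪ Nbhd G D) \ {v}) v t}

variable {D : Set V} {t : V}

theorem nbhdReaching_subset_nbhd : nbhdReaching G D t ⊆ Nbhd G D := fun _ hv => hv.1

theorem SimpleGraph.Walk.exists_mem_nbhdReaching_or_avoids (ht : t ∉ D ∪ Nbhd G D) {a : V}
    (p : G.Walk a t) :
    (∃ v ∈ p.support, v ∈ nbhdReaching G D t) ∨ ∀ w ∈ p.support, w ∉ D ∪ Nbhd G D := by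
  induction p with
  | nil =>
    refine .inr fun w hw => ?_
    rw [Walk.support_nil, List.mem_singleton] at hw
    rwa [hw]
  | @cons a b _ hab p ih =>
    rcases ih ht with ⟨v, hv, hvS⟩ | hp
    · exact .inl ⟨v, by simp [hv], hvS⟩
    have hcons : ∀ w ∈ (Walk.cons hab p).support, w ≠ a → w ∉ D ∪ Nbhd G D := by
      intro w hw hwa
      exact hp w ((List.mem_cons.1 hw).resolve_left hwa)
    by_cases ha : a ∈ D ∪ Nbhd G D
    · have hb : b ∉ D ∪ Nbhd G D := hp b p.start_mem_support
      have haN : a ∈ Nbhd G D := ha.resolve_left fun haD =>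
        hb (.inr ⟨fun hbD => hb (.inl hbD), a, haD, hab⟩)
      refine .inl ⟨a, Walk.start_mem_support _, haN, Walk.cons hab p, ?_⟩
      intro w hw ⟨hwX, hwa⟩
      exact hcons w hw hwa hwX
    · exact .inr fun w hw => by
        by_cases hwa : w = a
        · exact hwa ▸ ha
        · exact hcons w hw hwa

theorem isSep_nbhdReaching (htD : t ∉ D) (hDt : ∀ d ∈ D, ¬ G.Adj d t) :
    IsSep G D {t} (nbhdReaching G D t) := by
  have htN : t ∉ Nbhd G D := fun ⟨_, d, hd, hdt⟩ => hDt d hd hdt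
  refine ⟨(nbhd_disjoint_self D).mono_left nbhdReaching_subset_nbhd,
    Set.disjoint_singleton_right.2 fun ht => htN ht.1, ?_⟩
  intro a ha b hb
  rw [Set.mem_singleton_iff.1 hb]
  rintro ⟨p, hp⟩
  rcases p.exists_mem_nbhdReaching_or_avoids (D := D) (by simp [htD, htN]) with ⟨v, hv, hvS⟩ | hp'
  · exact hp v hv hvS
  · exact hp' a p.start_mem_support (.inl ha)

theorem exists_reachAvoid_of_not_mem {T : Set V} (hT : T ⊆ Nbhd G D) {v : V}
    (hv : v ∈ nbhdReaching G D t) (hvT : v ∉ T) : ∃ d ∈ D, ReachAvoid G T d t := by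
  obtain ⟨⟨-, d, hd, hdv⟩, q, hq⟩ := hv
  refine ⟨d, hd, Walk.cons hdv q, fun w hw hwT => ?_⟩
  rcases List.mem_cons.1 hw with rfl | hw
  · exact Set.disjoint_left.1 (nbhd_disjoint_self D) (hT hwT) hd
  · by_cases hwv : w = v
    · exact hvT (hwv ▸ hwT)
    · exact hq w hw ⟨.inr (hT hwT), hwv⟩

theorem nbhdReaching_subset_of_isSep {T : Set V} (hT : T ⊆ Nbhd G D) (hsep : IsSep G D {t} T) :
    nbhdReaching G D t ⊆ T := by
  intro v hv
  by_contra hvT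
  obtain ⟨d, hd, hreach⟩ := exists_reachAvoid_of_not_mem hT hv hvT
  exact hsep.2.2 d hd t rfl hreach

theorem isMinlSep_nbhdReaching (htD : t ∉ D) (hDt : ∀ d ∈ D, ¬ G.Adj d t) :
    IsMinlSep G D {t} (nbhdReaching G D t) :=
  ⟨isSep_nbhdReaching htD hDt, fun _ hS hsep =>
    hS.2 (nbhdReaching_subset_of_isSep (hS.1.trans nbhdReaching_subset_nbhd) hsep)⟩

theorem unique_minlSep_in_nbhd_general {V : Type*} (G : SimpleGraph V)
    (t : V) (D : Set V) (htD : t ∉ D)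
    (hDt : ∀ d ∈ D, ¬ G.Adj d t) :
    ∃! S : Set V, S ⊆ Nbhd G D ∧ IsMinlSep G D {t} S := by
  refine ⟨nbhdReaching G D t, ⟨nbhdReaching_subset_nbhd, isMinlSep_nbhdReaching htD hDt⟩, ?_⟩
  rintro T ⟨hTN, hT⟩
  exact (hT.eq_of_subset (isSep_nbhdReaching htD hDt) (nbhdReaching_subset_of_isSep hTN hT.1)).symm

/-- If `G[D]` is connected and `D` is not adjacent to `t`, then `N_G(D)` contains exactly
one minimal `D,t`-separator. -/
theorem unique_minlSep_in_nbhd {V : Type*} (G : SimpleGraph V) (hconn : G.Connected)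
    (s t : V) (D : Set V) (hsD : s ∈ D) (htD : t ∉ D)
    (hDconn : ∀ u ∈ D, ∀ v ∈ D, ReachAvoid G Dᶜ u v)
    (hDt : ∀ d ∈ D, ¬ G.Adj d t) :
    ∃! S : Set V, S ⊆ Nbhd G D ∧ IsMinlSep G D {t} S :=
  unique_minlSep_in_nbhd_general G t D htD hDt
end

section
/- Let G be an undirected graph and let A, B ⊆ V(G). Let S, S' ⊆ V(G) with S ∩ C = ∅ for C = C_{A∪B}(G−S) (the union of components of G−S meeting A∪B). Suppose C_{A∪B}(G−S) ⊆ C_{A∪B}(G−S'). If every set A_i in a fixed family of subsets of A is contained in a single component of G−S, then every A_i is contained in a single component of G−S'. (Monotonicity of connectivity constraints.) -/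
open SimpleGraph

variable {V : Type*}

/-- Monotonicity of connectivity constraints: if `C_{A∪B}(G−S) ⊆ C_{A∪B}(G−S')` and every
`A i` lies in a single component of `G−S`, then every `A i` lies in a single component
of `G−S'`. -/
theorem connectivity_constraints_monotone {V : Type*} (G : SimpleGraph V)
    (A B : Set V) (M : ℕ) (Af : Fin M → Set V)
    (hsub : ∀ i, Af i ⊆ A) (hdisj : ∀ i j, i ≠ j → Disjoint (Af i) (Af j))
    (S S' : Set V)
    (hSC : S ∩ SetReach G S (A ∪ B) = ∅)
    (hmono : SetReach G S (A ∪ B) ⊆ SetReach G S' (A ∪ B))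
    (h : ∀ i, ∀ x ∈ Af i, ∀ y ∈ Af i, ReachAvoid G S x y) :
    ∀ i, ∀ x ∈ Af i, ∀ y ∈ Af i, ReachAvoid G S' x y := by
  classical
  intro i x hx y hy
  obtain ⟨p, hp⟩ := h i x hx y hy
  refine ⟨p, fun w hw => ?_⟩
  have hwreach : w ∈ SetReach G S (A ∪ B) :=
    ⟨x, Or.inl (hsub i hx), p.takeUntil w hw,
      fun v hv => hp v ((p.support_takeUntil_subset hw) hv)⟩
  obtain ⟨a, _, q, hq⟩ := hmono hwreach
  exact hq w q.end_mem_support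
end

section
/- Let G be an undirected graph, s,t nonadjacent, A ⊆ V(G)\{s,t}, and let L be a minimum ({s}∪A),t-separator that is closest to t (its component of t is inclusion-minimal among minimum sA,t-separators). Then for every minimal ({s}∪A),t-separator T of G, if C_t(G−L) ⊄ C_t(G−T), then |T| > κ_{sA,t}(G). -/
open SimpleGraph

variable {V : Type*}

/-- If `L` is a minimum `({s}∪A),t`-separator closest to `t`, then every minimal
`({s}∪A),t`-separator `T` with `C_t(G−L) ⊄ C_t(G−T)` satisfies `|T| > κ_{sA,t}(G)`. -/
theorem closest_minSep_unique_sets {V : Type*} [Fintype V] (G : SimpleGraph V) (s t : V)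
    (hst : s ≠ t) (hadj : ¬ G.Adj s t) (A : Set V) (hsA : s ∉ A) (htA : t ∉ A)
    (hAt : ∀ a ∈ A, a ≠ t ∧ ¬ G.Adj a t)
    (L : Set V) (hL : IsMinSep G ({s} ∪ A) {t} L)
    (hclosest : ∀ T, IsMinSep G ({s} ∪ A) {t} T →
      SetReach G L {t} ⊆ SetReach G T {t}) :
    ∀ T, IsMinlSep G ({s} ∪ A) {t} T → ¬ (SetReach G L {t} ⊆ SetReach G T {t}) →
      kappa G ({s} ∪ A) {t} < (T.ncard : ℕ∞) := by
  intro T hT hsub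
  have hle : kappa G ({s} ∪ A) {t} ≤ (T.ncard : ℕ∞) :=
    sInf_le ⟨T, hT.1, rfl⟩
  rcases lt_or_eq_of_le hle with h | h
  · exact h
  · exfalso
    apply hsub
    apply hclosest T
    refine ⟨hT.1, fun S' hS' => ?_⟩
    have h2 : kappa G ({s} ∪ A) {t} ≤ (S'.ncard : ℕ∞) := sInf_le ⟨S', hS', rfl⟩
    rw [h] at h2
    exact_mod_cast h2
end
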